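/- Integration by parts for the derivative of f composed with the flow: under the same hypotheses, for f ∈ C_b^∞(ℝᴺ;ℝ) and Ψ ∈ 𝕂_r^q(ℝ,n), E[(∂_i f)(X_t^{x,[θ]}) Ψ(t,x,[θ])] = E[ f(X_t^{x,[θ]}) · δ( [(DX_t^{x,[θ]})* (Γ[X_t^{x,[θ]}])⁻¹]_i Ψ(t,x,[θ]) ) ], using the chain-rule identity ∂f(X_t^{x,[θ]}) = (Γ[X_t^{x,[θ]}])⁻¹ Γ[f(X_t^{x,[θ]}), X_t^{x,[θ]}]. -/

import Mathlib

open MeasureTheory Real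

/-- Integration by parts for the derivative of `f` composed with the flow:
`E[(∂_i f)(X_t^{x,[θ]}) Ψ] = E[f(X_t^{x,[θ]}) δ([(DX)* Γ[X]⁻¹]_i Ψ)]`,
based on the chain-rule identity `Γ[f(X), X] = Γ[X,X] ∂f(X)` of the functional calculus
for local Dirichlet forms, inverted by ellipticity. -/
theorem stmt12 {Ω H : Type*} [MeasurableSpace Ω] (P : Measure Ω) [IsProbabilityMeasure P]
    [NormedAddCommGroup H] [InnerProductSpace ℝ H]
    (N : ℕ)
    (DomD : Set (Ω → ℝ)) (DomDelta : Set (Ω → H))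
    (D : (Ω → ℝ) → Ω → H) (δ : (Ω → H) → Ω → ℝ)
    -- duality between D and δ
    (hdual : ∀ F ∈ DomD, ∀ Z ∈ DomDelta,
      ∫ ω, (inner ℝ (D F ω) (Z ω) : ℝ) ∂P = ∫ ω, F ω * δ Z ω ∂P)
    -- the solution functional X = X_t^{x,[θ]}
    (X : Ω → (Fin N → ℝ))
    (hXD : ∀ i : Fin N, (fun ω => X ω i) ∈ DomD)
    -- f smooth and bounded
    (f : (Fin N → ℝ) → ℝ) (hf : ContDiff ℝ (⊤ : ℕ∞) f) (hfb : ∃ M, ∀ z, |f z| ≤ M)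
    -- functional calculus (chain rule) for D, giving Γ[f(X),X] = Γ[X,X] ∂f(X)
    (hchain : (fun ω => f (X ω)) ∈ DomD ∧ ∀ ω,
      D (fun ω' => f (X ω')) ω
        = ∑ j, fderiv ℝ f (X ω) (Pi.single j 1) • D (fun ω' => X ω' j) ω)
    -- the carré du champ matrix Γ[X], assumed invertible (ellipticity)
    (Γm : Ω → Matrix (Fin N) (Fin N) ℝ)
    (hΓ : ∀ ω i j, Γm ω i j
      = (inner ℝ (D (fun ω' => X ω' i) ω) (D (fun ω' => X ω' j) ω) : ℝ))
    (hΓinv : ∀ ω, IsUnit (Γm ω))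
    -- the weight process and direction
    (Ψ : Ω → ℝ) (i : Fin N)
    (Wt : Ω → H)
    (hWt : ∀ ω, Wt ω = Ψ ω • ∑ j, ((Γm ω)⁻¹ j i) • D (fun ω' => X ω' j) ω)
    (hWdom : Wt ∈ DomDelta) :
    ∫ ω, fderiv ℝ f (X ω) (Pi.single i 1) * Ψ ω ∂P
      = ∫ ω, f (X ω) * δ Wt ω ∂P := by
  have key : ∀ ω, (inner ℝ (D (fun ω' => f (X ω')) ω) (Wt ω) : ℝ)
      = fderiv ℝ f (X ω) (Pi.single i 1) * Ψ ω := by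
    intro ω
    have hG : Γm ω * (Γm ω)⁻¹ = 1 :=
      Matrix.mul_nonsing_inv _ ((Matrix.isUnit_iff_isUnit_det _).mp (hΓinv ω))
    have hGi : ∀ k, ∑ j, Γm ω k j * (Γm ω)⁻¹ j i = if k = i then 1 else 0 := by
      intro k
      have := congrArg (fun M => M k i) hG
      simpa [Matrix.mul_apply, Matrix.one_apply] using this
    rw [hchain.2 ω, hWt ω, real_inner_smul_right, sum_inner]
    have : ∑ k, (inner ℝ (fderiv ℝ f (X ω) (Pi.single k 1) • D (fun ω' => X ω' k) ω)
        (∑ j, ((Γm ω)⁻¹ j i) • D (fun ω' => X ω' j) ω) : ℝ)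
        = ∑ k, fderiv ℝ f (X ω) (Pi.single k 1)
            * ∑ j, Γm ω k j * (Γm ω)⁻¹ j i := by
      refine Finset.sum_congr rfl fun k _ => ?_
      rw [real_inner_smul_left, inner_sum]
      congr 1
      refine Finset.sum_congr rfl fun j _ => ?_
      rw [real_inner_smul_right, hΓ ω k j]
      ring
    rw [this]
    simp only [hGi]
    simp [Finset.sum_ite_eq', mul_comm]
  calc ∫ ω, fderiv ℝ f (X ω) (Pi.single i 1) * Ψ ω ∂P
      = ∫ ω, (inner ℝ (D (fun ω' => f (X ω')) ω) (Wt ω) : ℝ) ∂P := by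
        exact integral_congr_ae (Filter.Eventually.of_forall fun ω => (key ω).symm)
    _ = ∫ ω, f (X ω) * δ Wt ω ∂P := hdual _ hchain.1 _ hWdom
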